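/- arXiv:1807.03038 — 4 statements merged into one kernel-verified Lean document; each statement's English description precedes it below -/
import Mathlib

section
/- Let C be a preadditive category with binary biproducts, let E, A1, A2, B be objects of C, and let φ1: E→A1, φ2: E→A2, ψ1: A1→B, ψ2: A2→B, φh1: A1→E, φh2: A2→E, ψh1: B→A1, ψh2: B→A2 be morphisms. Let m1, m2, a, b be integers with a·m1 + b·m2 = 1, and assume: φh1∘φ1 = m1·id_E, φ1∘φh1 = m1·id_{A1}, φh2∘φ2 = m2·id_E, φ2∘φh2 = m2·id_{A2}, ψh1∘ψ1 = m2·id_{A1}, ψ1∘ψh1 = m2·id_B, ψh2∘ψ2 = m1·id_{A2}, ψ2∘ψh2 = m1·id_B, ψ1∘φ1 = ψ2∘φ2, φh1∘ψh1 = φh2∘ψh2, ψh1∘ψ2 = φ1∘φh2, and ψh2∘ψ1 = φ2∘φh1. Then the morphism f: E ⊞ B → A1 ⊞ A2 with matrix [[φ1, ψh1], [−b·φ2, a·ψh2]] (i.e., whose component E→A1 is φ1, B→A1 is ψh1, E→A2 is −b·φ2, and B→A2 is a·ψh2) and the morphism g: A1 ⊞ A2 → E ⊞ B with matrix [[a·φh1,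 −φh2], [b·ψ1, ψ2]] are mutually inverse isomorphisms; in particular E ⊞ B ≅ A1 ⊞ A2. (This is the abstract content of the paper's Theorem A.1: for an elliptic curve E over a finite field with finite étale subgroups K1, K2 of coprime orders m1, m2 and K = K1 + K2, taking A1 = E/K1, A2 = E/K2, B = E/K and the natural quotient isogenies and their duals, it yields (E/K1) × (E/K2) ≅ (E/K) × E.) -/
/-!
Multiply the two matrices. On the diagonal the relations `φ̂ ∘ φ = deg φ` turn every entry into
`a m₁ + b m₂ = 1` times the identity; off the diagonal each entry is a multiple of the difference
of the two sides of one of the commuting squares, hence zero.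
-/

open CategoryTheory CategoryTheory.Limits

namespace CategoryTheory.Limits

variable {C : Type*} [Category C] [Preadditive C] [HasBinaryBiproducts C]

theorem biprod.desc_lift_lift_eq_ofComponents {X₁ X₂ Y₁ Y₂ : C}
    (f₁₁ : X₁ ⟶ Y₁) (f₁₂ : X₁ ⟶ Y₂) (f₂₁ : X₂ ⟶ Y₁) (f₂₂ : X₂ ⟶ Y₂) :
    biprod.desc (biprod.lift f₁₁ f₁₂) (biprod.lift f₂₁ f₂₂) =
      Biprod.ofComponents f₁₁ f₁₂ f₂₁ f₂₂ := by
  ext <;> simp [Biprod.ofComponents]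

theorem Biprod.ofComponents_id (X₁ X₂ : C) :
    Biprod.ofComponents (𝟙 X₁) 0 0 (𝟙 X₂) = 𝟙 (X₁ ⊞ X₂) := by
  ext <;> simp [Biprod.ofComponents]

end CategoryTheory.Limits

theorem mul_zsmul_add_mul_zsmul_of_bezout {M : Type*} [AddCommGroup M] {m₁ m₂ a b : ℤ}
    (hab : a * m₁ + b * m₂ = 1) (x : M) : (a * m₁) • x + (b * m₂) • x = x := by
  rw [← add_smul, hab, one_smul]

section IsogenyMatrix

open Preadditive

variable {C : Type*} [Category C] [Preadditive C] [HasBinaryBiproducts C] {E A₁ A₂ B : C}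
  (φ₁ : E ⟶ A₁) (φ₂ : E ⟶ A₂) (ψ₁ : A₁ ⟶ B) (ψ₂ : A₂ ⟶ B)
  (φh₁ : A₁ ⟶ E) (φh₂ : A₂ ⟶ E) (ψh₁ : B ⟶ A₁) (ψh₂ : B ⟶ A₂) {m₁ m₂ a b : ℤ}

theorem isogenyMatrix_hom_inv_id (hab : a * m₁ + b * m₂ = 1)
    (hφ₁ : φ₁ ≫ φh₁ = m₁ • 𝟙 E) (hφ₂ : φ₂ ≫ φh₂ = m₂ • 𝟙 E)
    (hψ₁ : ψh₁ ≫ ψ₁ = m₂ • 𝟙 B) (hψ₂ : ψh₂ ≫ ψ₂ = m₁ • 𝟙 B)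
    (hsq : φ₁ ≫ ψ₁ = φ₂ ≫ ψ₂) (hsqh : ψh₁ ≫ φh₁ = ψh₂ ≫ φh₂) :
    Biprod.ofComponents φ₁ (-(b • φ₂)) ψh₁ (a • ψh₂) ≫
        Biprod.ofComponents (a • φh₁) (b • ψ₁) (-φh₂) ψ₂ = 𝟙 (E ⊞ B) := by
  rw [Biprod.ofComponents_comp, ← Biprod.ofComponents_id]
  congr 1 <;>
    simp only [comp_zsmul, zsmul_comp, neg_comp, comp_neg, neg_neg, ← sub_eq_add_neg,
      smul_smul, hφ₁, hφ₂, hψ₁, hψ₂, hsq, hsqh, sub_self]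
  · exact mul_zsmul_add_mul_zsmul_of_bezout hab _
  · rw [add_comm]
    exact mul_zsmul_add_mul_zsmul_of_bezout hab _

theorem isogenyMatrix_inv_hom_id (hab : a * m₁ + b * m₂ = 1)
    (hφ₁ : φh₁ ≫ φ₁ = m₁ • 𝟙 A₁) (hφ₂ : φh₂ ≫ φ₂ = m₂ • 𝟙 A₂)
    (hψ₁ : ψ₁ ≫ ψh₁ = m₂ • 𝟙 A₁) (hψ₂ : ψ₂ ≫ ψh₂ = m₁ • 𝟙 A₂)
    (h₁₂ : ψ₂ ≫ ψh₁ = φh₂ ≫ φ₁) (h₂₁ : ψ₁ ≫ ψh₂ = φh₁ ≫ φ₂) :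
    Biprod.ofComponents (a • φh₁) (b • ψ₁) (-φh₂) ψ₂ ≫
        Biprod.ofComponents φ₁ (-(b • φ₂)) ψh₁ (a • ψh₂) = 𝟙 (A₁ ⊞ A₂) := by
  rw [Biprod.ofComponents_comp, ← Biprod.ofComponents_id]
  congr 1 <;>
    simp only [comp_zsmul, zsmul_comp, neg_comp, comp_neg, neg_neg, smul_neg, smul_smul,
      hφ₁, hφ₂, hψ₁, hψ₂, h₁₂, h₂₁, mul_comm b a, neg_add_cancel]
  · exact mul_zsmul_add_mul_zsmul_of_bezout hab _
  · rw [add_comm]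
    exact mul_zsmul_add_mul_zsmul_of_bezout hab _

end IsogenyMatrix

/-- Abstract form of Theorem A.1 of the paper: in a preadditive category with
binary biproducts, given morphisms behaving like the quotient isogenies
`E → E/K₁ = A₁`, `E → E/K₂ = A₂`, `Aᵢ → E/K = B` and their duals, with
`a·m₁ + b·m₂ = 1`, the explicit matrices `f` and `g` are mutually inverse
isomorphisms; in particular `E ⊞ B ≅ A₁ ⊞ A₂`
(i.e. `(E/K₁) × (E/K₂) ≅ (E/K) × E`). -/
theorem product_decomposition_of_isogeny_matrices
    {C : Type*} [Category C] [Preadditive C] [HasBinaryBiproducts C]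
    (E A1 A2 B : C)
    (φ1 : E ⟶ A1) (φ2 : E ⟶ A2) (ψ1 : A1 ⟶ B) (ψ2 : A2 ⟶ B)
    (φh1 : A1 ⟶ E) (φh2 : A2 ⟶ E) (ψh1 : B ⟶ A1) (ψh2 : B ⟶ A2)
    (m1 m2 a b : ℤ) (hab : a * m1 + b * m2 = 1)
    (h1 : φ1 ≫ φh1 = m1 • 𝟙 E) (h2 : φh1 ≫ φ1 = m1 • 𝟙 A1)
    (h3 : φ2 ≫ φh2 = m2 • 𝟙 E) (h4 : φh2 ≫ φ2 = m2 • 𝟙 A2)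
    (h5 : ψ1 ≫ ψh1 = m2 • 𝟙 A1) (h6 : ψh1 ≫ ψ1 = m2 • 𝟙 B)
    (h7 : ψ2 ≫ ψh2 = m1 • 𝟙 A2) (h8 : ψh2 ≫ ψ2 = m1 • 𝟙 B)
    (hsq : φ1 ≫ ψ1 = φ2 ≫ ψ2)
    (hsqh : ψh1 ≫ φh1 = ψh2 ≫ φh2)
    (h9 : ψ2 ≫ ψh1 = φh2 ≫ φ1)
    (h10 : ψ1 ≫ ψh2 = φh1 ≫ φ2)
    (f : E ⊞ B ⟶ A1 ⊞ A2)
    (hf : f = biprod.desc (biprod.lift φ1 (-(b • φ2))) (biprod.lift ψh1 (a • ψh2)))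
    (g : A1 ⊞ A2 ⟶ E ⊞ B)
    (hg : g = biprod.desc (biprod.lift (a • φh1) (b • ψ1)) (biprod.lift (-φh2) ψ2)) :
    f ≫ g = 𝟙 (E ⊞ B) ∧ g ≫ f = 𝟙 (A1 ⊞ A2) ∧ Nonempty ((E ⊞ B) ≅ (A1 ⊞ A2)) := by
  rw [biprod.desc_lift_lift_eq_ofComponents] at hf hg
  subst hf hg
  have hfg := isogenyMatrix_hom_inv_id φ1 φ2 ψ1 ψ2 φh1 φh2 ψh1 ψh2 hab h1 h3 h6 h8 hsq hsqh
  have hgf := isogenyMatrix_inv_hom_id φ1 φ2 ψ1 ψ2 φh1 φh2 ψh1 ψh2 hab h2 h4 h5 h7 h9 h10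
  exact ⟨hfg, hgf, ⟨⟨_, _, hfg, hgf⟩⟩⟩
end

section
/- Let G be a commutative group acting on a set X, let S be a set, let n ≥ 2, and let e : X^{n−1} → S satisfy the invariance property. Fix x ∈ X and g_1, …, g_n ∈ G, and set x_k = g_k • x for k = 1, …, n. Then for every pair of distinct indices i ≠ j in {1, …, n}, the value of e on the (n−1)-tuple obtained from (x_1, …, x_n) by deleting the i-th entry and replacing the j-th entry x_j by g_i • x_j equals e((g_1 ⋯ g_n) • x, x, …, x). In particular, this value is independent of the choice of i and j, so all n parties in the non-interactive key exchange protocol compute the same shared key. -/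
/-!
Party `i` holds the published points `g_k • x` for `k ≠ i` and applies `g_i` to the `j`-th one, so
every entry of its tuple is of the form `h_t • x`, where the `h_t` are the `g_k` (`k ≠ i`) with
`g_j` replaced by `g_i * g_j`. Invariance moves the whole product `∏ h_t = ∏ g_k` into the first
slot, whatever `i` and `j` are.
-/

namespace Fin

theorem prod_succAbove_ite_mul {M : Type*} [CommMonoid M] {n : ℕ} (f : Fin (n + 2) → M)
    {i j : Fin (n + 2)} (hij : i ≠ j) :
    ∏ t, (if i.succAbove t = j then f i * f j else f (i.succAbove t)) = ∏ k, f k := by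
  obtain ⟨t₀, rfl⟩ := exists_succAbove_eq hij.symm
  simp_rw [succAbove_right_inj]
  rw [prod_univ_succAbove _ t₀, prod_univ_succAbove f i, prod_univ_succAbove _ t₀]
  simp [succAbove_ne, mul_assoc]

end Fin

/-- Correctness of the paper's `n`-party NIKE (here `n = m + 2 ≥ 2`): if
`e : X^{n−1} → S` satisfies the invariance property for the action of the
commutative group `G` on `X`, `x ∈ X`, `x_k = g_k • x`, and `i ≠ j`, then
evaluating `e` on the `(n−1)`-tuple obtained from `(x_1,…,x_n)` by deleting
the `i`-th entry and replacing the `j`-th entry `x_j` by `g_i • x_j` gives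
`e((g_1 ⋯ g_n) • x, x, …, x)`; in particular the value is independent of
`i` and `j`, so all parties compute the same shared key. -/
theorem nike_correctness {G X S : Type*} [CommGroup G] [MulAction G X]
    (m : ℕ) (e : (Fin (m + 1) → X) → S)
    (hinv : ∀ (x : X) (h : Fin (m + 1) → G),
      e (fun t => h t • x) = e (Fin.cons ((∏ t, h t) • x) (fun _ => x)))
    (x : X) (gs : Fin (m + 2) → G) (i j : Fin (m + 2)) (hij : i ≠ j) :
    e (fun t => if i.succAbove t = j then gs i • (gs j • x) else gs (i.succAbove t) • x)
      = e (Fin.cons ((∏ k, gs k) • x) (fun _ => x)) := by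
  have tuple_eq : (fun t => if i.succAbove t = j then gs i • (gs j • x) else gs (i.succAbove t) • x)
      = fun t => (if i.succAbove t = j then gs i * gs j else gs (i.succAbove t)) • x := by
    funext t
    split_ifs <;> simp only [mul_smul]
  rw [tuple_eq, hinv, Fin.prod_succAbove_ite_mul gs hij]
end

section
/- Let G be a commutative group acting on a set X, let S be a set, and let e_n : X^n → S satisfy the invariance property and be injective in its first coordinate (for all fixed x_2, …, x_n ∈ X, the map y ↦ e_n(y, x_2, …, x_n) is injective). Fix x ∈ X, elements g_{i,b} ∈ G for i ∈ {1, …, n} and b ∈ {0, 1}, and set y_{i,b} = g_{i,b} • x. Then for every message m = (m_1, …, m_n) ∈ {0,1}^n, the element σ_0 = (∏_{i=1}^n g_{i,m_i}) • x is the unique element σ ∈ X satisfying the verification equation e_n(σ, x, …, x) = e_n(y_{1,m_1}, …, y_{n,m_n}). -/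
/-- Correctness and uniqueness for the paper's unique signature scheme
(with `n = m + 1` message bits): with secret key `(g_{i,b})`, public key
`x` and `y_{i,b} = g_{i,b} • x`, the signature
`σ₀ = (∏ i, g_{i,m_i}) • x` on a message `mm ∈ {0,1}^n` is the unique
element `σ ∈ X` satisfying the verification equation
`e_n(σ, x, …, x) = e_n(y_{1,m_1}, …, y_{n,m_n})`. -/
theorem unique_signature_correctness {G X S : Type*} [CommGroup G] [MulAction G X]
    (m : ℕ) (e : (Fin (m + 1) → X) → S)
    (hinv : ∀ (x : X) (g : Fin (m + 1) → G),
      e (fun i => g i • x) = e (Fin.cons ((∏ i, g i) • x) (fun _ => x)))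
    (hinj : ∀ xs : Fin m → X, Function.Injective (fun y : X => e (Fin.cons y xs)))
    (x : X) (g : Fin (m + 1) → Bool → G) (y : Fin (m + 1) → Bool → X)
    (hy : ∀ i b, y i b = g i b • x)
    (mm : Fin (m + 1) → Bool) (σ₀ : X) (hσ₀ : σ₀ = (∏ i, g i (mm i)) • x) :
    ∀ σ : X,
      e (Fin.cons σ (fun _ => x)) = e (fun i => y i (mm i)) ↔ σ = σ₀ := by
  intro σ
  have honest : e (fun i => y i (mm i)) = e (Fin.cons σ₀ fun _ => x) := by
    simp only [hy, hσ₀]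
    exact hinv x fun i => g i (mm i)
  rw [honest]
  exact (hinj _).eq_iff
end

section
/- Let G be a commutative group acting on a set X, let S be a set, and let e_n : X^n → S satisfy the invariance property. Fix x ∈ X, an element α ∈ G, elements d_{i,b} ∈ G for i ∈ {1, …, n} and b ∈ {0, 1}, a nonempty subset V ⊆ {1, …, n}, a function v : V → {0, 1}, and elements g_i ∈ G for i ∈ V satisfying ∏_{i∈V} g_i = α · ∏_{i∈V} d_{i,v(i)}. Let a = (a_1, …, a_n) ∈ {0,1}^n satisfy a_i = v(i) for all i ∈ V. For i = 1, …, n define C_i = g_i • x if i ∈ V, and C_i = d_{i,a_i} • x if i ∉ V. Then e_n(C_1, …, C_n) = e_n((α · ∏_{i=1}^n d_{i,a_i}) • x, x, …, x). -/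
/-!
By invariance, `e_n(C)` depends only on the product of the group elements behind the `C_i`,
and since `a` agrees with `v` on `V` the key condition makes that product `α · ∏ d_{i,a_i}`.
-/

open Finset

theorem Finset.prod_ite_mem_univ_of_prod_eq_mul {ι M : Type*} [Fintype ι] [DecidableEq ι]
    [CommMonoid M] {V : Finset ι} {f g : ι → M} {α : M} (h : ∏ i ∈ V, g i = α * ∏ i ∈ V, f i) :
    ∏ i, (if i ∈ V then g i else f i) = α * ∏ i, f i :=
  calc ∏ i, (if i ∈ V then g i else f i)
      = (∏ i ∈ V, g i) * ∏ i ∈ Vᶜ, f i := by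
        rw [prod_ite, filter_mem_eq_inter, univ_inter, ← sdiff_eq_filter, ← compl_eq_univ_sdiff]
    _ = α * ∏ i, f i := by rw [h, mul_assoc, prod_mul_prod_compl]

theorem constrained_prf_correctness_general {G X S : Type*} [CommGroup G] [MulAction G X]
    (m : ℕ) (e : (Fin (m + 1) → X) → S)
    (hinv : ∀ (x : X) (h : Fin (m + 1) → G),
      e (fun i => h i • x) = e (Fin.cons ((∏ i, h i) • x) (fun _ => x)))
    (x : X) (α : G) (d : Fin (m + 1) → Bool → G)
    (V : Finset (Fin (m + 1)))
    (v : Fin (m + 1) → Bool)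
    (g : Fin (m + 1) → G) (hg : ∏ i ∈ V, g i = α * ∏ i ∈ V, d i (v i))
    (a : Fin (m + 1) → Bool) (ha : ∀ i ∈ V, a i = v i)
    (C : Fin (m + 1) → X)
    (hC : ∀ i, C i = if i ∈ V then g i • x else d i (a i) • x) :
    e C = e (Fin.cons ((α * ∏ i, d i (a i)) • x) (fun _ => x)) := by
  have hC_smul : C = fun i => (if i ∈ V then g i else d i (a i)) • x := by
    funext i
    rw [hC i, ite_smul]
  have hg_a : ∏ i ∈ V, g i = α * ∏ i ∈ V, d i (a i) := by
    rw [hg, prod_congr rfl fun i hi => congrArg (d i) (ha i hi).symm]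
  rw [hC_smul, hinv, prod_ite_mem_univ_of_prod_eq_mul hg_a]

/-- Correctness of the paper's bit-fixing constrained PRF (with `n = m + 1`):
if `e_n` satisfies the invariance property, `V` is a nonempty set of indices,
`a` agrees with the constraint `v` on `V`, and the constrained-key elements
`g_i` (for `i ∈ V`) satisfy `∏_{i∈V} g_i = α · ∏_{i∈V} d_{i,v(i)}`, then
evaluating `e_n` on `C` (where `C_i = g_i • x` for `i ∈ V` and
`C_i = d_{i,a_i} • x` for `i ∉ V`) recovers the PRF value
`F(k,a) = e_n((α · ∏ i, d_{i,a_i}) • x, x, …, x)`. -/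
theorem constrained_prf_correctness {G X S : Type*} [CommGroup G] [MulAction G X]
    (m : ℕ) (e : (Fin (m + 1) → X) → S)
    (hinv : ∀ (x : X) (h : Fin (m + 1) → G),
      e (fun i => h i • x) = e (Fin.cons ((∏ i, h i) • x) (fun _ => x)))
    (x : X) (α : G) (d : Fin (m + 1) → Bool → G)
    (V : Finset (Fin (m + 1))) (hV : V.Nonempty)
    (v : Fin (m + 1) → Bool)
    (g : Fin (m + 1) → G) (hg : ∏ i ∈ V, g i = α * ∏ i ∈ V, d i (v i))
    (a : Fin (m + 1) → Bool) (ha : ∀ i ∈ V, a i = v i)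
    (C : Fin (m + 1) → X)
    (hC : ∀ i, C i = if i ∈ V then g i • x else d i (a i) • x) :
    e C = e (Fin.cons ((α * ∏ i, d i (a i)) • x) (fun _ => x)) :=
  constrained_prf_correctness_general m e hinv x α d V v g hg a ha C hC
end
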